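/- For coprime odd integers p, q with 2 ≤ p < q, the (q-1) × (q-1) matrix M with entries M_{i,j} = (-1)^{i+j+1} sin(ijpπ/q) (for 1 ≤ i,j ≤ q-1) satisfies MᵀM = (q/2)·I; in particular M is invertible. -/

import Mathlib

/-!
Writing `a = p i`, `b = p j`, the entry `(Mᵀ M)_{ij}` is `±∑_{k<q} sin (π a k / q) sin (π b k / q)`,
and product-to-sum turns it into a difference of two sums `∑_{k<q} cos (π n k / q)` with
`n = a - b` and `n = a + b`. Telescoping against `2 sin (π n / 2q)` evaluates such a sum to
`(1 - cos (n π)) / 2` unless `2q ∣ n` (when it is `q`). Since `p` is odd and prime to `q`,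
`2q ∣ p m` with `|m| < 2q` forces `m = 0`, so only `a - b` on the diagonal is divisible; there
the two sums are `q` and `0`, and off the diagonal they coincide because `a + b ≡ a - b mod 2`.
-/

open Real Matrix Finset

lemma sum_fin_pred_succ {A : Type*} [AddCommMonoid A] (q : ℕ) (f : ℕ → A) (hf : f 0 = 0) :
    ∑ k : Fin (q - 1), f (k + 1) = ∑ k ∈ range q, f k := by
  rcases q with _ | q
  · simp
  · rw [Fin.sum_univ_eq_sum_range (fun k ↦ f (k + 1)), sum_range_succ', hf, add_zero,
      Nat.add_sub_cancel]

lemma isUnit_of_transpose_mul_self_eq_smul_one {n K : Type*} [Fintype n] [DecidableEq n]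
    [Field K] {A : Matrix n n K} {c : K} (hc : c ≠ 0) (h : Aᵀ * A = c • 1) : IsUnit A := by
  have hinv : (c⁻¹ • Aᵀ) * A = 1 := by rw [smul_mul, h, smul_smul, inv_mul_cancel₀ hc, one_smul]
  exact (isUnit_iff_isUnit_det A).mpr (isUnit_det_of_left_inverse hinv)

lemma two_mul_sin_half_mul_sum_range_cos (q : ℕ) (θ : ℝ) :
    2 * sin (θ / 2) * ∑ k ∈ range q, cos (k * θ) = sin (q * θ - θ / 2) + sin (θ / 2) := by
  have htele : ∀ k ∈ range q, 2 * sin (θ / 2) * cos (k * θ) =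
      sin ((k + 1 : ℕ) * θ - θ / 2) - sin (k * θ - θ / 2) := by
    intro k _
    rw [show ((k + 1 : ℕ) : ℝ) * θ - θ / 2 = k * θ + θ / 2 by push_cast; ring, sin_add, sin_sub]
    ring
  rw [mul_sum, sum_congr rfl htele, sum_range_sub (fun k : ℕ ↦ sin (k * θ - θ / 2))]
  simp [sin_neg]

lemma sum_range_cos_pi_mul_div {q : ℕ} (hq : q ≠ 0) {n : ℤ} (hn : ¬ (2 * q : ℤ) ∣ n) :
    ∑ k ∈ range q, cos (π * n * k / q) = (1 - cos (n * π)) / 2 := by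
  set θ := π * n / q with hθ_def
  have hsin : sin (θ / 2) ≠ 0 := by
    rw [Ne, sin_eq_zero_iff]
    rintro ⟨m, hm⟩
    refine hn ⟨m, ?_⟩
    have : (n : ℝ) = 2 * q * m := by
      rw [hθ_def] at hm
      field_simp at hm
      linarith
    exact_mod_cast this
  have hθ : q * θ = n * π := by rw [hθ_def]; field_simp
  have h := two_mul_sin_half_mul_sum_range_cos q θ
  rw [hθ, sin_sub, sin_int_mul_pi] at h
  refine mul_left_cancel₀ (mul_ne_zero two_ne_zero hsin) ?_
  calc 2 * sin (θ / 2) * ∑ k ∈ range q, cos (π * n * k / q)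
      = 2 * sin (θ / 2) * ∑ k ∈ range q, cos (k * θ) := by
        congr 1; refine sum_congr rfl fun k _ ↦ ?_; congr 1; ring
    _ = 2 * sin (θ / 2) * ((1 - cos (n * π)) / 2) := by rw [h]; ring

lemma sum_range_sin_mul_sin {q : ℕ} (hq : q ≠ 0) {a b : ℤ} (hab : ¬ (2 * q : ℤ) ∣ a + b) :
    ∑ k ∈ range q, sin (π * a * k / q) * sin (π * b * k / q) =
      if (2 * q : ℤ) ∣ a - b then (q : ℝ) / 2 else 0 := by
  have hprod : ∀ k ∈ range q, sin (π * a * k / q) * sin (π * b * k / q) =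
      (cos (π * (a - b : ℤ) * k / q) - cos (π * (a + b : ℤ) * k / q)) / 2 := by
    intro k _
    push_cast
    rw [show π * (a - b) * k / q = π * a * k / q - π * b * k / q by ring,
      show π * (a + b) * k / q = π * a * k / q + π * b * k / q by ring, cos_sub, cos_add]
    ring
  rw [sum_congr rfl hprod, ← sum_div, sum_sub_distrib, sum_range_cos_pi_mul_div hq hab]
  have hcos : cos ((a + b : ℤ) * π) = cos ((a - b : ℤ) * π) := by
    rw [show ((a + b : ℤ) : ℝ) * π = (a - b : ℤ) * π + b * (2 * π) by push_cast; ring,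
      cos_add_int_mul_two_pi]
  split_ifs with hdvd
  · obtain ⟨m, hm⟩ := hdvd
    have hone : ∀ k ∈ range q, cos (π * (a - b : ℤ) * k / q) = 1 := by
      intro k _
      rw [hm, show π * ((2 * q * m : ℤ) : ℝ) * k / q = (m * k : ℤ) * (2 * π) by
        push_cast; field_simp, cos_int_mul_two_pi]
    rw [sum_congr rfl hone, hcos, hm,
      show ((2 * q * m : ℤ) : ℝ) * π = (q * m : ℤ) * (2 * π) by push_cast; ring,
      cos_int_mul_two_pi]
    simp
  · rw [sum_range_cos_pi_mul_div hq hdvd, hcos]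
    ring

lemma eq_zero_of_two_mul_dvd_mul {p q : ℕ} (hcop : p.Coprime q) (hp : Odd p) {m : ℤ}
    (hm : |m| < 2 * q) (h : (2 * q : ℤ) ∣ p * m) : m = 0 := by
  have hcop' : IsCoprime (2 * q : ℤ) p := by
    exact_mod_cast Nat.isCoprime_iff_coprime.mpr ((hp.coprime_two_right.mul_right hcop).symm)
  exact Int.eq_zero_of_abs_lt_dvd (hcop'.dvd_of_dvd_mul_left h) hm

noncomputable def signedSineMatrix (p q : ℕ) : Matrix (Fin (q - 1)) (Fin (q - 1)) ℝ :=
  of fun i j ↦ (-1 : ℝ) ^ (((i : ℕ) + 1) + ((j : ℕ) + 1) + 1) *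
    sin ((((i : ℕ) + 1) : ℝ) * (((j : ℕ) + 1) : ℝ) * p * π / q)

lemma signedSineMatrix_transpose_mul_self_apply (p q : ℕ) (i j : Fin (q - 1)) :
    ((signedSineMatrix p q)ᵀ * signedSineMatrix p q) i j =
      (-1 : ℝ) ^ (((i : ℕ) + 1) + ((j : ℕ) + 1)) * ∑ k ∈ range q,
        sin (π * (p * ((i : ℕ) + 1) : ℤ) * k / q) * sin (π * (p * ((j : ℕ) + 1) : ℤ) * k / q) := by
  have hterm : ∀ k : Fin (q - 1),
      signedSineMatrix p q k i * signedSineMatrix p q k j =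
        (-1 : ℝ) ^ (((i : ℕ) + 1) + ((j : ℕ) + 1)) *
          (sin (π * (p * ((i : ℕ) + 1) : ℤ) * ((k : ℕ) + 1 : ℕ) / q) *
            sin (π * (p * ((j : ℕ) + 1) : ℤ) * ((k : ℕ) + 1 : ℕ) / q)) := by
    intro k
    simp only [signedSineMatrix, of_apply]
    rw [mul_mul_mul_comm, ← pow_add,
      show ((k : ℕ) + 1 + ((i : ℕ) + 1) + 1) + ((k : ℕ) + 1 + ((j : ℕ) + 1) + 1) =
        ((i : ℕ) + 1 + ((j : ℕ) + 1)) + 2 * ((k : ℕ) + 2) by ring,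
      pow_add, pow_mul, neg_one_sq, one_pow, mul_one]
    push_cast
    ring_nf
  simp only [mul_apply, transpose_apply, hterm, ← mul_sum]
  rw [sum_fin_pred_succ q (fun k : ℕ ↦ sin (π * (p * ((i : ℕ) + 1) : ℤ) * k / q) *
    sin (π * (p * ((j : ℕ) + 1) : ℤ) * k / q)) (by simp)]

lemma signedSineMatrix_transpose_mul_self {p q : ℕ} (hcop : p.Coprime q) (hp : Odd p)
    (hq : q ≠ 0) : (signedSineMatrix p q)ᵀ * signedSineMatrix p q = ((q : ℝ) / 2) • 1 := by
  ext i j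
  have hi := i.isLt
  have hj := j.isLt
  have hsum : ¬ (2 * q : ℤ) ∣ (p * ((i : ℕ) + 1) : ℤ) + (p * ((j : ℕ) + 1) : ℤ) := by
    intro h
    rw [← mul_add] at h
    have := eq_zero_of_two_mul_dvd_mul hcop hp (by rw [abs_lt]; omega) h
    omega
  have hdiff : (2 * q : ℤ) ∣ (p * ((i : ℕ) + 1) : ℤ) - (p * ((j : ℕ) + 1) : ℤ) ↔ i = j := by
    rw [← mul_sub]
    refine ⟨fun h ↦ ?_, fun h ↦ by simp [h]⟩
    have := eq_zero_of_two_mul_dvd_mul hcop hp (by rw [abs_lt]; omega) h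
    exact Fin.ext (by omega)
  rw [signedSineMatrix_transpose_mul_self_apply, sum_range_sin_mul_sin hq hsum]
  simp only [hdiff, Matrix.smul_apply, one_apply, smul_eq_mul]
  split_ifs with hij
  · rw [hij, Even.neg_one_pow ⟨_, rfl⟩]
    ring
  · simp

theorem stmt_2_general (p q : ℕ) (hcop : Nat.Coprime p q) (hpq : p < q)
    (hpo : Odd p)
    (M : Matrix (Fin (q - 1)) (Fin (q - 1)) ℝ)
    (hM : ∀ i j : Fin (q - 1),
      M i j = (-1 : ℝ) ^ (((i : ℕ) + 1) + ((j : ℕ) + 1) + 1) *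
        Real.sin ((((i : ℕ) + 1) : ℝ) * (((j : ℕ) + 1) : ℝ) * p * Real.pi / q)) :
    Mᵀ * M = ((q : ℝ) / 2) • 1 ∧ IsUnit M := by
  obtain rfl : M = signedSineMatrix p q := ext hM
  have hq : q ≠ 0 := by omega
  have hMtM := signedSineMatrix_transpose_mul_self hcop hpo hq
  exact ⟨hMtM, isUnit_of_transpose_mul_self_eq_smul_one (by positivity) hMtM⟩

theorem stmt_2 (p q : ℕ) (hcop : Nat.Coprime p q) (hp : 2 ≤ p) (hpq : p < q)
    (hpo : Odd p) (hqo : Odd q)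
    (M : Matrix (Fin (q - 1)) (Fin (q - 1)) ℝ)
    (hM : ∀ i j : Fin (q - 1),
      M i j = (-1 : ℝ) ^ (((i : ℕ) + 1) + ((j : ℕ) + 1) + 1) *
        Real.sin ((((i : ℕ) + 1) : ℝ) * (((j : ℕ) + 1) : ℝ) * p * Real.pi / q)) :
    Mᵀ * M = ((q : ℝ) / 2) • 1 ∧ IsUnit M :=
  stmt_2_general p q hcop hpq hpo M hM
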